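/- The element Δ_s := δ ⊗ 1 − 1 ⊗ s(δ) of R ⊗_{R^s} R is independent of the choice of δ with ∂_s(δ) = 1, and satisfies g·Δ_s = Δ_s·g for all g ∈ R (i.e., (gδ) ⊗ 1 − g ⊗ s(δ) = δ ⊗ g − 1 ⊗ s(δ)g in R ⊗_{R^s} R). -/
import Mathlib

open MvPolynomial

/-- The linear polynomial in `R = Sym(𝔥*)` corresponding to the element of `𝔥*`
with coordinates `φ` (identifying `𝔥` with `Fin n → k` so that `𝔥*` has dual basis
corresponding to the variables `X i`). -/
noncomputable def lin {k : Type*} [CommRing k] {n : ℕ} (φ : Fin n → k) :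
    MvPolynomial (Fin n) k :=
  ∑ i, C (φ i) * X i

/-- The reflection `s` acting on `R = Sym(𝔥*)`, induced by
`s(γ) = γ - ⟨α^∨, γ⟩·α` on `𝔥*`, where `α^∨ ∈ 𝔥` has coordinates `αv` and
`α ∈ 𝔥*` has coordinates `α`. -/
noncomputable def sRefl {k : Type*} [CommRing k] {n : ℕ} (αv α : Fin n → k) :
    MvPolynomial (Fin n) k →ₐ[k] MvPolynomial (Fin n) k :=
  aeval (fun i => X i - C (αv i) * lin α)

/-- The subalgebra `R^s` of `s`-invariants. -/
noncomputable def invSub {k : Type*} [CommRing k] {n : ℕ} (αv α : Fin n → k) :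
    Subalgebra k (MvPolynomial (Fin n) k) :=
  AlgHom.equalizer (sRefl αv α) (AlgHom.id k (MvPolynomial (Fin n) k))

open scoped TensorProduct

set_option synthInstance.maxHeartbeats 1000000
set_option maxHeartbeats 1000000
set_option linter.unusedSectionVars false

section Aux

variable {k : Type*} [CommRing k] {n : ℕ} (αv α : Fin n → k)

lemma sRefl_lin (φ : Fin n → k) :
    sRefl αv α (lin φ) = lin φ - C (∑ i, αv i * φ i) * lin α := by
  simp only [sRefl, lin, map_sum, map_mul, aeval_C, aeval_X, algebraMap_eq, mul_sub,
    Finset.sum_sub_distrib, map_sum, Finset.sum_mul]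
  congr 1
  apply Finset.sum_congr rfl
  intro i _
  ring

lemma mem_invSub_iff (x : MvPolynomial (Fin n) k) :
    x ∈ invSub αv α ↔ sRefl αv α x = x := Iff.rfl

lemma move {c : MvPolynomial (Fin n) k} (hc : c ∈ invSub αv α)
    (a b : MvPolynomial (Fin n) k) :
    (c * a) ⊗ₜ[↥(invSub αv α)] b = a ⊗ₜ[↥(invSub αv α)] (c * b) := by
  have h1 : ((⟨c, hc⟩ : ↥(invSub αv α)) • a) ⊗ₜ[↥(invSub αv α)] b
      = a ⊗ₜ[↥(invSub αv α)] ((⟨c, hc⟩ : ↥(invSub αv α)) • b) :=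
    TensorProduct.smul_tmul _ _ _
  rw [Algebra.smul_def, Algebra.smul_def, Subalgebra.algebraMap_eq] at h1
  simpa using h1

lemma C_mem (a : k) : C a ∈ invSub αv α := by
  rw [mem_invSub_iff,
    show (C a : MvPolynomial (Fin n) k) = algebraMap k _ a from rfl, AlgHom.commutes]

variable (hpair : ∑ i, αv i * α i = 2) (δ : Fin n → k) (hδ : ∑ i, αv i * δ i = 1)

include hpair hδ

lemma sRefl_delta : sRefl αv α (lin δ) = lin δ - lin α := by
  rw [sRefl_lin, hδ, map_one, one_mul]

lemma sRefl_alpha : sRefl αv α (lin α) = - lin α := by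
  rw [sRefl_lin, hpair, map_ofNat]
  ring

lemma sumInv_mem : lin δ + sRefl αv α (lin δ) ∈ invSub αv α := by
  rw [mem_invSub_iff, map_add, sRefl_delta αv α hpair δ hδ, map_sub,
    sRefl_delta αv α hpair δ hδ, sRefl_alpha αv α hpair δ hδ]
  ring

lemma prodInv_mem : lin δ * sRefl αv α (lin δ) ∈ invSub αv α := by
  rw [mem_invSub_iff, map_mul, sRefl_delta αv α hpair δ hδ, map_sub,
    sRefl_delta αv α hpair δ hδ, sRefl_alpha αv α hpair δ hδ]
  ring

lemma X_mem (i : Fin n) : X i - C (αv i) * lin δ ∈ invSub αv α := by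
  rw [mem_invSub_iff, map_sub, map_mul, sRefl_delta αv α hpair δ hδ]
  have hX : sRefl αv α (X i) = X i - C (αv i) * lin α := aeval_X _ i
  have hC : sRefl αv α (C (αv i)) = C (αv i) := by
    rw [show (C (αv i) : MvPolynomial (Fin n) k) = algebraMap k _ (αv i) from rfl,
      AlgHom.commutes]
  rw [hX, hC]
  ring

lemma key_lemma :
    (lin δ ⊗ₜ[↥(invSub αv α)] (1 : MvPolynomial (Fin n) k)
        - (1 : MvPolynomial (Fin n) k) ⊗ₜ[↥(invSub αv α)] sRefl αv α (lin δ))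
      * (lin δ ⊗ₜ[↥(invSub αv α)] (1 : MvPolynomial (Fin n) k)
        - (1 : MvPolynomial (Fin n) k) ⊗ₜ[↥(invSub αv α)] lin δ) = 0 := by
  set a := lin δ with ha
  set b := sRefl αv α (lin δ) with hb
  have h1 : (a ⊗ₜ[↥(invSub αv α)] (1:MvPolynomial (Fin n) k)) * (a ⊗ₜ[↥(invSub αv α)] 1)
      = (a * a) ⊗ₜ[↥(invSub αv α)] 1 := by
    rw [Algebra.TensorProduct.tmul_mul_tmul, mul_one]
  have h2 : (a ⊗ₜ[↥(invSub αv α)] (1:MvPolynomial (Fin n) k)) * (1 ⊗ₜ[↥(invSub αv α)] a)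
      = a ⊗ₜ[↥(invSub αv α)] a := by
    rw [Algebra.TensorProduct.tmul_mul_tmul, mul_one, one_mul]
  have h3 : ((1:MvPolynomial (Fin n) k) ⊗ₜ[↥(invSub αv α)] b) * (a ⊗ₜ[↥(invSub αv α)] 1)
      = a ⊗ₜ[↥(invSub αv α)] b := by
    rw [Algebra.TensorProduct.tmul_mul_tmul, mul_one, one_mul]
  have h4 : ((1:MvPolynomial (Fin n) k) ⊗ₜ[↥(invSub αv α)] b) * (1 ⊗ₜ[↥(invSub αv α)] a)
      = (1:MvPolynomial (Fin n) k) ⊗ₜ[↥(invSub αv α)] (b * a) := by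
    rw [Algebra.TensorProduct.tmul_mul_tmul, mul_one]
  have e1 : a ⊗ₜ[↥(invSub αv α)] a
      = ((a + b) * a) ⊗ₜ[↥(invSub αv α)] (1 : MvPolynomial (Fin n) k)
        - a ⊗ₜ[↥(invSub αv α)] b := by
    have h := move αv α (sumInv_mem αv α hpair δ hδ) a 1
    rw [mul_one] at h
    rw [← ha, ← hb] at h
    rw [h, TensorProduct.tmul_add]
    abel
  have e2 : (1:MvPolynomial (Fin n) k) ⊗ₜ[↥(invSub αv α)] (b * a)
      = (a * b) ⊗ₜ[↥(invSub αv α)] (1 : MvPolynomial (Fin n) k) := by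
    have h := move αv α (prodInv_mem αv α hpair δ hδ) 1 1
    simp only [mul_one] at h
    rw [← ha, ← hb] at h
    rw [mul_comm b a]
    exact h.symm
  have e3 : ((a + b) * a) ⊗ₜ[↥(invSub αv α)] (1 : MvPolynomial (Fin n) k)
      = (a * a) ⊗ₜ[↥(invSub αv α)] (1:MvPolynomial (Fin n) k)
        + (a * b) ⊗ₜ[↥(invSub αv α)] 1 := by
    rw [add_mul, TensorProduct.add_tmul, mul_comm b a]
  linear_combination h1 - h2 - h3 + h4 - e1 + e2 - e3

lemma main_lemma (f : MvPolynomial (Fin n) k) :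
    (lin δ ⊗ₜ[↥(invSub αv α)] (1 : MvPolynomial (Fin n) k)
        - (1 : MvPolynomial (Fin n) k) ⊗ₜ[↥(invSub αv α)] sRefl αv α (lin δ))
      * (f ⊗ₜ[↥(invSub αv α)] (1 : MvPolynomial (Fin n) k)
        - (1 : MvPolynomial (Fin n) k) ⊗ₜ[↥(invSub αv α)] f) = 0 := by
  set a := lin δ with ha
  set b := sRefl αv α (lin δ) with hb
  set Δ := a ⊗ₜ[↥(invSub αv α)] (1 : MvPolynomial (Fin n) k)
      - (1 : MvPolynomial (Fin n) k) ⊗ₜ[↥(invSub αv α)] b with hΔ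
  have kinv : ∀ c : MvPolynomial (Fin n) k, c ∈ invSub αv α →
      Δ * (c ⊗ₜ[↥(invSub αv α)] (1 : MvPolynomial (Fin n) k)
        - (1 : MvPolynomial (Fin n) k) ⊗ₜ[↥(invSub αv α)] c) = 0 := by
    intro c hc
    have h := move αv α hc 1 1
    simp only [mul_one] at h
    rw [h, sub_self, mul_zero]
  have key := key_lemma αv α hpair δ hδ
  rw [← ha, ← hb, ← hΔ] at key
  have kX : ∀ i : Fin n,
      Δ * ((X i : MvPolynomial (Fin n) k) ⊗ₜ[↥(invSub αv α)] (1 : MvPolynomial (Fin n) k)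
        - (1 : MvPolynomial (Fin n) k) ⊗ₜ[↥(invSub αv α)] (X i : MvPolynomial (Fin n) k))
      = 0 := by
    intro i
    set c : MvPolynomial (Fin n) k := X i - C (αv i) * a with hcdef
    set e : MvPolynomial (Fin n) k := C (αv i) with hedef
    have hc := kinv c (X_mem αv α hpair δ hδ i)
    have d1 : (X i : MvPolynomial (Fin n) k) ⊗ₜ[↥(invSub αv α)] (1 : MvPolynomial (Fin n) k)
        = c ⊗ₜ[↥(invSub αv α)] (1 : MvPolynomial (Fin n) k)
          + (e * a) ⊗ₜ[↥(invSub αv α)] 1 := by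
      rw [← TensorProduct.add_tmul]
      congr 1
      rw [hcdef]
      ring
    have d2 : (1 : MvPolynomial (Fin n) k) ⊗ₜ[↥(invSub αv α)] (X i : MvPolynomial (Fin n) k)
        = (1 : MvPolynomial (Fin n) k) ⊗ₜ[↥(invSub αv α)] c
          + (1 : MvPolynomial (Fin n) k) ⊗ₜ[↥(invSub αv α)] (e * a) := by
      rw [← TensorProduct.tmul_add]
      congr 1
      rw [hcdef]
      ring
    have p1 : (e ⊗ₜ[↥(invSub αv α)] (1 : MvPolynomial (Fin n) k))
        * (a ⊗ₜ[↥(invSub αv α)] 1) = (e * a) ⊗ₜ[↥(invSub αv α)] 1 := by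
      rw [Algebra.TensorProduct.tmul_mul_tmul, mul_one]
    have p2 : (e ⊗ₜ[↥(invSub αv α)] (1 : MvPolynomial (Fin n) k))
        * ((1:MvPolynomial (Fin n) k) ⊗ₜ[↥(invSub αv α)] a)
        = e ⊗ₜ[↥(invSub αv α)] a := by
      rw [Algebra.TensorProduct.tmul_mul_tmul, mul_one, one_mul]
    have m2 : e ⊗ₜ[↥(invSub αv α)] a
        = (1 : MvPolynomial (Fin n) k) ⊗ₜ[↥(invSub αv α)] (e * a) := by
      have h := move αv α (C_mem αv α (αv i)) 1 a
      rw [mul_one, ← hedef] at h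
      exact h
    linear_combination Δ * d1 - Δ * d2 + hc - Δ * p1 + Δ * p2 + Δ * m2
      + (e ⊗ₜ[↥(invSub αv α)] (1:MvPolynomial (Fin n) k)) * key
  induction f using MvPolynomial.induction_on with
  | C x => exact kinv _ (C_mem αv α x)
  | add p q hp hq =>
    have d1 : (p + q) ⊗ₜ[↥(invSub αv α)] (1:MvPolynomial (Fin n) k)
        = p ⊗ₜ[↥(invSub αv α)] 1 + q ⊗ₜ[↥(invSub αv α)] 1 := TensorProduct.add_tmul _ _ _
    have d2 : (1:MvPolynomial (Fin n) k) ⊗ₜ[↥(invSub αv α)] (p + q)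
        = (1:MvPolynomial (Fin n) k) ⊗ₜ[↥(invSub αv α)] p
          + (1:MvPolynomial (Fin n) k) ⊗ₜ[↥(invSub αv α)] q := TensorProduct.tmul_add _ _ _
    linear_combination hp + hq + Δ * d1 - Δ * d2
  | mul_X p i hp =>
    have q1 : (p ⊗ₜ[↥(invSub αv α)] (1:MvPolynomial (Fin n) k))
        * ((X i : MvPolynomial (Fin n) k) ⊗ₜ[↥(invSub αv α)] 1)
        = (p * X i) ⊗ₜ[↥(invSub αv α)] 1 := by
      rw [Algebra.TensorProduct.tmul_mul_tmul, mul_one]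
    have q3 : ((1:MvPolynomial (Fin n) k) ⊗ₜ[↥(invSub αv α)] p)
        * ((1:MvPolynomial (Fin n) k) ⊗ₜ[↥(invSub αv α)] (X i : MvPolynomial (Fin n) k))
        = (1:MvPolynomial (Fin n) k) ⊗ₜ[↥(invSub αv α)] (p * X i) := by
      rw [Algebra.TensorProduct.tmul_mul_tmul, mul_one]
    linear_combination ((X i : MvPolynomial (Fin n) k) ⊗ₜ[↥(invSub αv α)]
        (1:MvPolynomial (Fin n) k)) * hp
      + ((1:MvPolynomial (Fin n) k) ⊗ₜ[↥(invSub αv α)] p) * (kX i)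
      - Δ * q1 + Δ * q3

end Aux

theorem Delta_independent_and_central {k : Type*} [CommRing k] [IsDomain k] {n : ℕ}
    (αv α : Fin n → k) (hpair : ∑ i, αv i * α i = 2)
    (δ δ' : Fin n → k) (hδ : ∑ i, αv i * δ i = 1) (hδ' : ∑ i, αv i * δ' i = 1) :
    ((lin δ ⊗ₜ[↥(invSub αv α)] (1 : MvPolynomial (Fin n) k)
        - (1 : MvPolynomial (Fin n) k) ⊗ₜ[↥(invSub αv α)] sRefl αv α (lin δ)) =
      (lin δ' ⊗ₜ[↥(invSub αv α)] (1 : MvPolynomial (Fin n) k)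
        - (1 : MvPolynomial (Fin n) k) ⊗ₜ[↥(invSub αv α)] sRefl αv α (lin δ'))) ∧
    ∀ g : MvPolynomial (Fin n) k,
      ((g * lin δ) ⊗ₜ[↥(invSub αv α)] (1 : MvPolynomial (Fin n) k)
          - g ⊗ₜ[↥(invSub αv α)] sRefl αv α (lin δ)) =
        (lin δ ⊗ₜ[↥(invSub αv α)] g
          - (1 : MvPolynomial (Fin n) k) ⊗ₜ[↥(invSub αv α)] (sRefl αv α (lin δ) * g)) := by
  constructor
  · have hmem : lin δ - lin δ' ∈ invSub αv α := by
      rw [mem_invSub_iff, map_sub, sRefl_delta αv α hpair δ hδ,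
        sRefl_delta αv α hpair δ' hδ']
      ring
    have h := move αv α hmem 1 1
    simp only [mul_one] at h
    rw [TensorProduct.sub_tmul, TensorProduct.tmul_sub] at h
    rw [sRefl_delta αv α hpair δ hδ, sRefl_delta αv α hpair δ' hδ',
      TensorProduct.tmul_sub, TensorProduct.tmul_sub]
    linear_combination h
  · intro g
    have h := main_lemma αv α hpair δ hδ g
    have r1 : (lin δ ⊗ₜ[↥(invSub αv α)] (1:MvPolynomial (Fin n) k))
        * (g ⊗ₜ[↥(invSub αv α)] 1) = (g * lin δ) ⊗ₜ[↥(invSub αv α)] 1 := by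
      rw [Algebra.TensorProduct.tmul_mul_tmul, mul_one, mul_comm (lin δ) g]
    have r2 : (lin δ ⊗ₜ[↥(invSub αv α)] (1:MvPolynomial (Fin n) k))
        * ((1:MvPolynomial (Fin n) k) ⊗ₜ[↥(invSub αv α)] g)
        = lin δ ⊗ₜ[↥(invSub αv α)] g := by
      rw [Algebra.TensorProduct.tmul_mul_tmul, mul_one, one_mul]
    have r3 : ((1:MvPolynomial (Fin n) k) ⊗ₜ[↥(invSub αv α)] sRefl αv α (lin δ))
        * (g ⊗ₜ[↥(invSub αv α)] 1) = g ⊗ₜ[↥(invSub αv α)] sRefl αv α (lin δ) := by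
      rw [Algebra.TensorProduct.tmul_mul_tmul, mul_one, one_mul]
    have r4 : ((1:MvPolynomial (Fin n) k) ⊗ₜ[↥(invSub αv α)] sRefl αv α (lin δ))
        * ((1:MvPolynomial (Fin n) k) ⊗ₜ[↥(invSub αv α)] g)
        = (1:MvPolynomial (Fin n) k) ⊗ₜ[↥(invSub αv α)] (sRefl αv α (lin δ) * g) := by
      rw [Algebra.TensorProduct.tmul_mul_tmul, mul_one]
    linear_combination h - r1 + r2 + r3 - r4
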